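/- In the ring SPol_n, for all homogeneous f the identity (x_{i+1} - x_i) f - (-1)^{|f|} s_i(f)(x_{i+1} - x_i) = (x_{i+1}² - x_i²) ∂_i(f) holds; i.e., ∂_i(f) = ((x_{i+1}-x_i)f - (-1)^{|f|} s_i(f)(x_{i+1}-x_i))/(x_{i+1}² - x_i²). -/

import Mathlib

/-!
Write `y = x_{i'} - x_i` and `c = x_{i'}² - x_i²`. On a generator the formula reads
`y x_j + s(x_j) y = c ∂(x_j)`, a direct computation from the skew relations. Since `c` commutes
with every generator, the twisted Leibniz rule propagates the formula from `a` and `g` to `a g`,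
hence to all monomials, and linearity extends it to their span.
-/

noncomputable section

/-- The defining relations of the skew polynomial ring: `x_i x_j = -x_j x_i` for `i ≠ j`. -/
inductive SkewRel (k : Type*) [CommRing k] (n : ℕ) :
    FreeAlgebra k (Fin n) → FreeAlgebra k (Fin n) → Prop
  | skew (i j : Fin n) (h : i ≠ j) :
      SkewRel k n (FreeAlgebra.ι k i * FreeAlgebra.ι k j)
        (-(FreeAlgebra.ι k j * FreeAlgebra.ι k i))

/-- The ring of skew polynomials `SPol_n = k⟨x_1,…,x_n⟩/(x_i x_j + x_j x_i, i ≠ j)`. -/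
abbrev SPol (k : Type*) [CommRing k] (n : ℕ) : Type _ := RingQuot (SkewRel k n)

/-- The generators `x_i` of the skew polynomial ring. -/
def SPol.X (k : Type*) [CommRing k] (n : ℕ) (i : Fin n) : SPol k n :=
  RingQuot.mkAlgHom k (SkewRel k n) (FreeAlgebra.ι k i)

/-- The monomial `x_{l₁} ⋯ x_{l_r}` associated to a word `l` in the generators. -/
def SPol.mon (k : Type*) [CommRing k] (n : ℕ) (l : List (Fin n)) : SPol k n :=
  (l.map (SPol.X k n)).prod

/-- The homogeneous component of `SPol_n` spanned by the monomials in `m` generators;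
these are the homogeneous elements of `ℤ`-degree `2m` for the grading with `|x_i| = 2`
(equivalently, of parity `m`). -/
def SPol.homog (k : Type*) [CommRing k] (n : ℕ) (m : ℕ) : Submodule k (SPol k n) :=
  Submodule.span k {f | ∃ l : List (Fin n), l.length = m ∧ f = SPol.mon k n l}

/-- `D` is the odd divided difference operator for the simple transposition exchanging the
(adjacent) indices `i` and `i'`, where `s` is the algebra endomorphism permuting the
variables accordingly: `D` takes the value `1` on `x_i` and `x_{i'}` and `0` on the other
generators, and satisfies the twisted Leibniz rule
`∂(fg) = ∂(f)g + (-1)^m s(f) ∂(g)` for `f` homogeneous of `ℤ`-degree `2m`. -/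
def IsOddDD (k : Type*) [CommRing k] (n : ℕ) (i i' : Fin n)
    (s : SPol k n →ₐ[k] SPol k n) (D : SPol k n →ₗ[k] SPol k n) : Prop :=
  (∀ j : Fin n, s (SPol.X k n j) = SPol.X k n (Equiv.swap i i' j)) ∧
  (∀ j : Fin n, D (SPol.X k n j) = if j = i ∨ j = i' then 1 else 0) ∧
  (∀ (m : ℕ) (f g : SPol k n), f ∈ SPol.homog k n m →
      D (f * g) = D f * g + ((-1 : ℤ) ^ m) • (s f * D g))

theorem Commute.sq_right_of_mul_eq_neg_mul {R : Type*} [Ring R] {a b : R}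
    (h : a * b = -(b * a)) : Commute a (b ^ 2) := by
  rw [Commute, SemiconjBy, sq, ← mul_assoc, h, neg_mul, mul_assoc, h, mul_neg, neg_neg,
    mul_assoc]

theorem closed_formula_mul {A F : Type*} [Ring A] [FunLike F A A] [MulHomClass F A A]
    (s : F) (D : A → A) (y c : A) {a g : A} {εa εg : ℤ}
    (hLeib : D (a * g) = D a * g + εa • (s a * D g))
    (ha : y * a - εa • (s a * y) = c * D a) (hg : y * g - εg • (s g * y) = c * D g)
    (hc : Commute (s a) c) :
    y * (a * g) - (εa * εg) • (s (a * g) * y) = c * D (a * g) :=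
  calc y * (a * g) - (εa * εg) • (s (a * g) * y)
      = (y * a - εa • (s a * y)) * g + εa • (s a * (y * g - εg • (s g * y))) := by
        simp only [map_mul, sub_mul, mul_sub, smul_sub, smul_mul_assoc, mul_smul_comm,
          mul_smul, mul_assoc]
        abel
    _ = c * (D a * g + εa • (s a * D g)) := by
        rw [ha, hg, ← mul_assoc (s a), hc.eq, mul_add, mul_smul_comm, mul_assoc, mul_assoc]
    _ = c * D (a * g) := by rw [hLeib]

theorem closed_formula_of_mem_span {R A : Type*} [CommRing R] [Ring A] [Algebra R A]
    (s : A →ₐ[R] A) (D : A →ₗ[R] A) (y c : A) (ε : ℤ) {S : Set A}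
    (hS : ∀ f ∈ S, y * f - ε • (s f * y) = c * D f) {f : A} (hf : f ∈ Submodule.span R S) :
    y * f - ε • (s f * y) = c * D f := by
  let L : A →ₗ[R] A := LinearMap.mulLeft R y - ε • (LinearMap.mulRight R y ∘ₗ s.toLinearMap)
    - LinearMap.mulLeft R c ∘ₗ D
  have hL (f : A) : L f = y * f - ε • (s f * y) - c * D f := by simp [L]
  have hspan : Submodule.span R S ≤ LinearMap.ker L := Submodule.span_le.mpr fun f hf ↦ by
    rw [SetLike.mem_coe, LinearMap.mem_ker, hL, hS f hf, sub_self]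
  have hker := hspan hf
  rwa [LinearMap.mem_ker, hL, sub_eq_zero] at hker

namespace SPol

variable {k : Type*} [CommRing k] {n : ℕ}

theorem X_mul_X_of_ne {j j' : Fin n} (h : j ≠ j') :
    X k n j * X k n j' = -(X k n j' * X k n j) := by
  simpa [X] using RingQuot.mkAlgHom_rel k (SkewRel.skew j j' h)

theorem commute_X_sq (j p : Fin n) : Commute (X k n j) (X k n p ^ 2) := by
  obtain rfl | h := eq_or_ne j p
  · exact Commute.self_pow _ 2
  · exact Commute.sq_right_of_mul_eq_neg_mul (X_mul_X_of_ne h)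

theorem mon_cons (j : Fin n) (l : List (Fin n)) : mon k n (j :: l) = X k n j * mon k n l := by
  simp [mon]

theorem one_mem_homog_zero : (1 : SPol k n) ∈ homog k n 0 :=
  Submodule.subset_span ⟨[], rfl, rfl⟩

theorem X_mem_homog_one (j : Fin n) : X k n j ∈ homog k n 1 :=
  Submodule.subset_span ⟨[j], rfl, by simp [mon]⟩

end SPol

namespace IsOddDD

open SPol

variable {k : Type*} [CommRing k] {n : ℕ} {i i' : Fin n}
  {s : SPol k n →ₐ[k] SPol k n} {D : SPol k n →ₗ[k] SPol k n}

theorem map_X (hD : IsOddDD k n i i' s D) (j : Fin n) :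
    s (X k n j) = X k n (Equiv.swap i i' j) :=
  hD.1 j

theorem apply_X (hD : IsOddDD k n i i' s D) (j : Fin n) :
    D (X k n j) = if j = i ∨ j = i' then 1 else 0 :=
  hD.2.1 j

theorem apply_mul (hD : IsOddDD k n i i' s D) {m : ℕ} {f : SPol k n} (hf : f ∈ homog k n m)
    (g : SPol k n) : D (f * g) = D f * g + ((-1 : ℤ) ^ m) • (s f * D g) :=
  hD.2.2 m f g hf

theorem map_one_eq_zero (hD : IsOddDD k n i i' s D) : D 1 = 0 := by
  simpa using hD.apply_mul one_mem_homog_zero 1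

theorem closed_formula_X (hD : IsOddDD k n i i' s D) (j : Fin n) :
    (X k n i' - X k n i) * X k n j + s (X k n j) * (X k n i' - X k n i)
      = (X k n i' ^ 2 - X k n i ^ 2) * D (X k n j) := by
  rw [hD.map_X, hD.apply_X]
  by_cases hji : j = i
  · subst hji
    simp only [Equiv.swap_apply_left, true_or, if_true]
    rw [mul_one, sq, sq, sub_mul, mul_sub]
    abel
  by_cases hji' : j = i'
  · subst hji'
    simp only [Equiv.swap_apply_right, or_true, if_true]
    rw [mul_one, sq, sq, sub_mul, mul_sub]
    abel
  rw [Equiv.swap_apply_of_ne_of_ne hji hji', if_neg (by tauto), sub_mul, mul_sub,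
    X_mul_X_of_ne hji', X_mul_X_of_ne hji, mul_zero]
  abel

theorem closed_formula_mon (hD : IsOddDD k n i i' s D) (l : List (Fin n)) :
    (X k n i' - X k n i) * mon k n l
        - ((-1 : ℤ) ^ l.length) • (s (mon k n l) * (X k n i' - X k n i))
      = (X k n i' ^ 2 - X k n i ^ 2) * D (mon k n l) := by
  induction l with
  | nil => simp [mon, hD.map_one_eq_zero]
  | cons j l ih =>
    rw [mon_cons, List.length_cons, pow_succ']
    refine closed_formula_mul s D _ _ (hD.apply_mul (X_mem_homog_one j) _) ?_ ih ?_
    · rw [neg_one_zsmul, sub_neg_eq_add]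
      exact hD.closed_formula_X j
    · rw [hD.map_X]
      exact (commute_X_sq _ _).sub_right (commute_X_sq _ _)

end IsOddDD

theorem odd_dd_closed_formula_general (k : Type*) [CommRing k] (n : ℕ) (i i' : Fin n)
    (s : SPol k n →ₐ[k] SPol k n) (D : SPol k n →ₗ[k] SPol k n)
    (hD : IsOddDD k n i i' s D)
    (m : ℕ) (f : SPol k n) (hf : f ∈ SPol.homog k n m) :
    (SPol.X k n i' - SPol.X k n i) * f
        - ((-1 : ℤ) ^ m) • (s f * (SPol.X k n i' - SPol.X k n i))
      = (SPol.X k n i' ^ 2 - SPol.X k n i ^ 2) * D f := by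
  refine closed_formula_of_mem_span s D _ _ _ ?_ hf
  rintro _ ⟨l, rfl, rfl⟩
  exact hD.closed_formula_mon l

/-- for homogeneous `f` (of `ℤ`-degree `2m`, i.e. a combination of monomials
in `m` generators) one has
`(x_{i+1} - x_i) f - (-1)^m s_i(f)(x_{i+1} - x_i) = (x_{i+1}² - x_i²) ∂_i(f)`. -/
theorem odd_dd_closed_formula (k : Type*) [CommRing k] (n : ℕ) (i i' : Fin n)
    (hii' : (i' : ℕ) = (i : ℕ) + 1)
    (s : SPol k n →ₐ[k] SPol k n) (D : SPol k n →ₗ[k] SPol k n)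
    (hD : IsOddDD k n i i' s D)
    (m : ℕ) (f : SPol k n) (hf : f ∈ SPol.homog k n m) :
    (SPol.X k n i' - SPol.X k n i) * f
        - ((-1 : ℤ) ^ m) • (s f * (SPol.X k n i' - SPol.X k n i))
      = (SPol.X k n i' ^ 2 - SPol.X k n i ^ 2) * D f :=
  odd_dd_closed_formula_general k n i i' s D hD m f hf
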